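/- arXiv:1605.04340 — 3 statements merged into one kernel-verified Lean document; each statement's English description precedes it below -/
import Mathlib

section
/- Let n ≥ 2 and let m_1, …, m_{n−1} be nonnegative integers with Σ_{i=1}^{n−1} m_i = n and Σ_{i=1}^{n−1} i·m_i = 2n − 2. Then the number of simple graphs on the labeled vertex set {1,…,n} that are trees and have exactly m_i vertices of degree i for every 1 ≤ i ≤ n−1 equals ( (n−2)! / Π_{i=1}^{n−1} ((i−1)!)^{m_i} ) · ( n! / Π_{i=1}^{n−1} m_i! ). -/
/-- The degree of a vertex `v` in a simple graph `G`, as the number of its neighbors. -/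
noncomputable def vdeg {V : Type*} (G : SimpleGraph V) (v : V) : ℕ :=
  (G.neighborSet v).ncard

/-!
Write the degrees of a tree on `n ≥ 2` vertices as `e v + 1`, so that `∑ e v = n - 2`. Some
vertex `w` is a leaf, and deleting it leaves a tree on the other vertices in which only the
neighbour `u` of `w` has lost a degree. Hence the number `T e` of trees with degrees `e + 1`
satisfies `T e = ∑ (T (e - δ u))` over the `u` with `e u ≠ 0`, which is the Pascal recursion of
the multinomial coefficients: `T e = (n - 2)! / ∏ (e v)!`. This value is the same for all degree
functions with `m i` vertices of degree `i`, and these functions form one orbit of `Perm V`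
whose stabiliser is the product of the permutation groups of the fibres, so there are
`n! / ∏ (m i)!` of them.
-/

open Finset
open scoped Nat

@[to_additive]
lemma prod_subtype_of_eq_one {V M : Type*} [Fintype V] [CommMonoid M] {s : Set V} [Fintype s]
    (f : V → M) (hf : ∀ v ∉ s, f v = 1) : ∏ x : s, f x = ∏ v, f v :=
  Fintype.prod_of_injective _ Subtype.val_injective _ f
    (fun v hv => hf v fun h => hv ⟨⟨v, h⟩, rfl⟩) fun _ => rfl

lemma exists_eq_zero_of_sum_lt_card {V : Type*} [Fintype V] (e : V → ℕ)
    (h : ∑ v, e v < Fintype.card V) : ∃ v, e v = 0 := by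
  obtain ⟨v, -, hv⟩ := exists_lt_of_sum_lt (s := univ) (f := e) (g := fun _ => 1)
    (by rwa [sum_const, card_univ, smul_eq_mul, mul_one])
  exact ⟨v, Nat.lt_one_iff.1 hv⟩

namespace Nat

lemma cast_multinomial {α K : Type*} [Field K] [CharZero K] (s : Finset α) (f : α → ℕ) :
    (multinomial s f : K) = (∑ i ∈ s, f i)! / ∏ i ∈ s, ((f i)! : K) := by
  rw [multinomial, Nat.cast_div (prod_factorial_dvd_factorial_sum s f), Nat.cast_prod]
  exact_mod_cast (prod_factorial_pos s f).ne'

theorem multinomial_eq_sum_multinomial_update {α : Type*} [DecidableEq α] (s : Finset α)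
    (f : α → ℕ) (hf : ∑ i ∈ s, f i ≠ 0) :
    multinomial s f = ∑ a ∈ s with f a ≠ 0, multinomial s (Function.update f a (f a - 1)) := by
  refine Nat.eq_of_mul_eq_mul_left (prod_factorial_pos s f) ?_
  have hterm : ∀ a ∈ s, f a ≠ 0 → (∏ i ∈ s, (f i)!) *
      multinomial s (Function.update f a (f a - 1)) = f a * (∑ i ∈ s, f i - 1)! := by
    intro a ha hfa
    have hprod : ∏ i ∈ s, (f i)! = f a * ∏ i ∈ s, (Function.update f a (f a - 1) i)! := by
      rw [← mul_prod_erase s _ ha, ← mul_prod_erase s _ ha, Function.update_self,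
        ← mul_assoc, mul_factorial_pred hfa]
      congr 1
      exact prod_congr rfl fun i hi => by rw [Function.update_of_ne (ne_of_mem_erase hi)]
    have hsum : ∑ i ∈ s, Function.update f a (f a - 1) i = ∑ i ∈ s, f i - 1 := by
      rw [sum_update_of_mem ha, ← add_sum_erase s f ha, sdiff_singleton_eq_erase]
      omega
    rw [hprod, mul_assoc, multinomial_spec, hsum]
  rw [multinomial_spec, mul_sum, sum_congr rfl fun a ha =>
    hterm a (mem_filter.1 ha).1 (mem_filter.1 ha).2, ← sum_mul, sum_filter_ne_zero,
    mul_factorial_pred hf]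

lemma multinomial_subtype_of_eq_zero {V : Type*} [Fintype V] {s : Set V} [Fintype s]
    (e : V → ℕ) (he : ∀ v ∉ s, e v = 0) :
    multinomial univ (fun x : s => e x) = multinomial univ e := by
  rw [multinomial, multinomial, sum_subtype_of_eq_zero e he,
    prod_subtype_of_eq_one (fun v => (e v)!) fun v hv => by rw [he v hv, factorial_zero]]

end Nat

section FiberCard

variable {V ι : Type*}

@[to_additive]
lemma prod_comp_eq_prod_pow_card_fiber {M : Type*} [Fintype V] [Fintype ι] [DecidableEq ι]
    [CommMonoid M] (d : V → ι) (f : ι → M) :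
    ∏ v, f (d v) = ∏ i, f i ^ Nat.card {v // d v = i} := by
  rw [← Fintype.prod_fiberwise' d f]
  refine prod_congr rfl fun i _ => ?_
  rw [prod_const, card_univ, Nat.card_eq_fintype_card]

lemma exists_card_fiber_eq [Fintype V] [Fintype ι] (m : ι → ℕ)
    (hm : ∑ i, m i = Fintype.card V) : ∃ d : V → ι, ∀ i, Nat.card {v // d v = i} = m i := by
  obtain ⟨e⟩ : Nonempty (V ≃ Σ i, Fin (m i)) := Fintype.card_eq.1 (by simp [hm])
  refine ⟨fun v => (e v).1, fun i => ?_⟩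
  rw [Nat.card_congr ((e.subtypeEquiv fun _ => Iff.rfl).trans (Equiv.sigmaSubtype i)),
    Nat.card_eq_fintype_card, Fintype.card_fin]

lemma mem_orbit_domMulAct_iff [Finite V] {d₀ d : V → ι} :
    d ∈ MulAction.orbit (Equiv.Perm V)ᵈᵐᵃ d₀ ↔
      ∀ i, Nat.card {v // d v = i} = Nat.card {v // d₀ v = i} := by
  constructor
  · rintro ⟨σ, rfl⟩ i
    exact Nat.card_congr ((DomMulAct.mk.symm σ).subtypeEquiv fun _ => Iff.rfl)
  · intro h
    let e := fun i => Classical.choice (Finite.card_eq.1 (h i))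
    exact ⟨DomMulAct.mk (Equiv.ofFiberEquiv e), funext fun v => Equiv.ofFiberEquiv_map e v⟩

lemma card_stabilizer_domMulAct [Finite V] [Fintype ι] (d : V → ι) :
    Nat.card (MulAction.stabilizer (Equiv.Perm V)ᵈᵐᵃ d) =
      ∏ i, (Nat.card {v // d v = i})! := by
  rw [Nat.card_congr MulOpposite.opEquiv, Nat.card_congr (DomMulAct.stabilizerMulEquiv d).toEquiv,
    Nat.card_pi]
  exact prod_congr rfl fun i _ => Nat.card_perm

theorem card_fun_card_fiber_eq_multinomial [Fintype V] [Fintype ι] [DecidableEq ι] (m : ι → ℕ)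
    (hm : ∑ i, m i = Fintype.card V) :
    Nat.card {d : V → ι // ∀ i, Nat.card {v // d v = i} = m i} = Nat.multinomial univ m := by
  obtain ⟨d₀, hd₀⟩ := exists_card_fiber_eq m hm
  have horbit : Nat.card {d : V → ι // ∀ i, Nat.card {v // d v = i} = m i} =
      (MulAction.orbit (Equiv.Perm V)ᵈᵐᵃ d₀).ncard :=
    Nat.card_congr (Equiv.subtypeEquivRight fun d => by simp only [mem_orbit_domMulAct_iff, hd₀])
  have key := (MulAction.stabilizer (Equiv.Perm V)ᵈᵐᵃ d₀).card_mul_index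
  rw [MulAction.index_stabilizer, card_stabilizer_domMulAct, Nat.card_congr DomMulAct.mk.symm,
    Nat.card_perm, Nat.card_eq_fintype_card, ← hm] at key
  simp only [hd₀] at key
  rw [horbit, Nat.multinomial, ← key, Nat.mul_div_cancel_left _ (Nat.prod_factorial_pos _ _)]

end FiberCard

namespace SimpleGraph

variable {V : Type*} {G : SimpleGraph V} {w : V}

lemma vdeg_eq_degree (G : SimpleGraph V) (v : V) [Fintype (G.neighborSet v)] :
    vdeg G v = G.degree v := by
  rw [vdeg, ← Nat.card_coe_set_eq, Nat.card_eq_fintype_card, card_neighborSet_eq_degree]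

lemma vdeg_of_subsingleton [Subsingleton V] (G : SimpleGraph V) (v : V) : vdeg G v = 0 := by
  rw [vdeg, Set.ncard_eq_zero, Set.eq_empty_iff_forall_notMem]
  exact fun x hx => hx.ne (Subsingleton.elim v x)

lemma vdeg_lt_card [Fintype V] (G : SimpleGraph V) (v : V) : vdeg G v < Fintype.card V := by
  classical
  rw [vdeg_eq_degree]
  exact G.degree_lt_card_verts v

lemma Preconnected.vdeg_pos [Finite V] [Nontrivial V] (hG : G.Preconnected) (v : V) :
    0 < vdeg G v := by
  have := Fintype.ofFinite V
  classical
  rw [vdeg_eq_degree]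
  exact hG.degree_pos_of_nontrivial v

lemma IsTree.vdeg_mem_Icc [Fintype V] [Nontrivial V] (hG : G.IsTree) (v : V) :
    vdeg G v ∈ Icc 1 (Fintype.card V - 1) :=
  mem_Icc.2 ⟨hG.connected.preconnected.vdeg_pos v, Nat.le_sub_one_of_lt (vdeg_lt_card G v)⟩

lemma isAcyclic_of_induce_compl_singleton (hw : (G.neighborSet w).Subsingleton)
    (h : (G.induce {w}ᶜ).IsAcyclic) : G.IsAcyclic := by
  classical
  intro x c hc
  by_cases hwc : w ∈ c.support
  · have hc' := hc.rotate hwc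
    exact hc'.snd_ne_penultimate
      (hw (Walk.adj_snd hc'.not_nil) (Walk.adj_penultimate hc'.not_nil).symm)
  · have hs : ∀ y ∈ c.support, y ∈ ({w}ᶜ : Set V) := fun y hy hyw => hwc (hyw ▸ hy)
    refine h (c.induce _ hs) ((Walk.isCycle_map_iff_of_injective
      (f := (Embedding.induce (G := G) _).toHom) Subtype.val_injective).1 ?_)
    rwa [Walk.map_induce c hs]

lemma connected_of_induce_compl_singleton {u : V} (hwu : G.Adj w u)
    (h : (G.induce {w}ᶜ).Connected) : G.Connected := by
  refine (connected_iff_exists_forall_reachable G).2 ⟨u, fun v => ?_⟩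
  by_cases hv : v = w
  · exact hv ▸ hwu.reachable.symm
  · exact (h.preconnected ⟨u, hwu.ne'⟩ ⟨v, hv⟩).map (Embedding.induce _).toHom

lemma isTree_iff_induce_compl_singleton {u : V} (h : G.neighborSet w = {u}) :
    G.IsTree ↔ (G.induce {w}ᶜ).IsTree := by
  have hadj : ∀ x, G.Adj w x ↔ x = u := fun x => by
    rw [← mem_neighborSet, h, Set.mem_singleton_iff]
  refine ⟨fun hG => ⟨?_, hG.isAcyclic.induce _⟩, fun hT => ⟨?_, ?_⟩⟩
  · have : Fintype (G.neighborSet w) :=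
      (h ▸ Set.finite_singleton u : (G.neighborSet w).Finite).fintype
    exact hG.connected.induce_compl_singleton_of_degree_eq_one
      (degree_eq_one_iff_existsUnique_adj.2 ⟨u, (hadj u).2 rfl, fun x => (hadj x).1⟩)
  · exact connected_of_induce_compl_singleton ((hadj u).2 rfl) hT.connected
  · exact isAcyclic_of_induce_compl_singleton (h ▸ Set.subsingleton_singleton) hT.isAcyclic

lemma vdeg_induce_compl_singleton [Finite V] [DecidableEq V] {u : V} (h : G.neighborSet w = {u})
    (v : ({w}ᶜ : Set V)) :
    vdeg G v = vdeg (G.induce {w}ᶜ) v + if (v : V) = u then 1 else 0 := by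
  have himage : Subtype.val '' (G.induce {w}ᶜ).neighborSet v = G.neighborSet v \ {w} := by
    ext x
    constructor
    · rintro ⟨x, hx, rfl⟩
      exact ⟨hx, x.2⟩
    · rintro ⟨hx, hxw⟩
      exact ⟨⟨x, hxw⟩, hx, rfl⟩
  have hw : w ∈ G.neighborSet v ↔ (v : V) = u := by
    rw [mem_neighborSet, adj_comm, ← mem_neighborSet, h, Set.mem_singleton_iff]
  rw [vdeg, vdeg, ← Set.ncard_image_of_injective _ Subtype.val_injective, himage]
  split_ifs with hvu
  · exact (Set.ncard_sdiff_singleton_add_one (hw.2 hvu)).symm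
  · rw [Set.sdiff_singleton_eq_self (mt hw.1 hvu), add_zero]

def addLeaf (w : V) (u : ({w}ᶜ : Set V)) (T : SimpleGraph ({w}ᶜ : Set V)) : SimpleGraph V :=
  T.map Subtype.val ⊔ edge w u

lemma addLeaf_adj {u : ({w}ᶜ : Set V)} {T : SimpleGraph ({w}ᶜ : Set V)} {a b : V} :
    (addLeaf w u T).Adj a b ↔
      (∃ (ha : a ≠ w) (hb : b ≠ w), T.Adj ⟨a, ha⟩ ⟨b, hb⟩) ∨ (a = w ∧ b = u) ∨ (a = u ∧ b = w) := by
  have hu : (u : V) ≠ w := u.2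
  simp only [addLeaf, sup_adj, map_adj', edge_adj]
  constructor
  · rintro (⟨-, a, b, h, rfl, rfl⟩ | ⟨h, -⟩)
    · exact Or.inl ⟨a.2, b.2, h⟩
    · exact Or.inr h
  · rintro (⟨ha, hb, h⟩ | h)
    · exact Or.inl ⟨fun hab => h.ne (Subtype.ext hab), _, _, h, rfl, rfl⟩
    · refine Or.inr ⟨h, ?_⟩
      rcases h with ⟨rfl, rfl⟩ | ⟨rfl, rfl⟩
      exacts [hu.symm, hu]

lemma neighborSet_addLeaf (u : ({w}ᶜ : Set V)) (T : SimpleGraph ({w}ᶜ : Set V)) :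
    (addLeaf w u T).neighborSet w = {(u : V)} := by
  have hu : w ≠ u := fun h => u.2 h.symm
  ext x
  simp [mem_neighborSet, addLeaf_adj, hu]

lemma induce_addLeaf (u : ({w}ᶜ : Set V)) (T : SimpleGraph ({w}ᶜ : Set V)) :
    (addLeaf w u T).induce {w}ᶜ = T := by
  ext a b
  have ha : (a : V) ≠ w := a.2
  have hb : (b : V) ≠ w := b.2
  simp [addLeaf_adj, ha, hb]

lemma addLeaf_induce {u : V} (h : G.neighborSet w = {u}) (hu : u ∈ ({w}ᶜ : Set V)) :
    addLeaf w ⟨u, hu⟩ (G.induce {w}ᶜ) = G := by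
  have hadj : ∀ x, G.Adj w x ↔ x = u := fun x => by
    rw [← mem_neighborSet, h, Set.mem_singleton_iff]
  have hu' : u ≠ w := hu
  ext a b
  rcases eq_or_ne a w with rfl | ha
  · simp [addLeaf_adj, hadj, hu'.symm]
  rcases eq_or_ne b w with rfl | hb
  · simp [addLeaf_adj, G.adj_comm a, hadj, ha]
  simp [addLeaf_adj, ha, hb]

lemma vdeg_addLeaf [Finite V] [DecidableEq V] (u : ({w}ᶜ : Set V))
    (T : SimpleGraph ({w}ᶜ : Set V)) (x : ({w}ᶜ : Set V)) :
    vdeg (addLeaf w u T) x = vdeg T x + if x = u then 1 else 0 := by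
  rw [vdeg_induce_compl_singleton (neighborSet_addLeaf u T), induce_addLeaf]
  simp only [Subtype.coe_inj]

lemma addLeaf_inj {u u' : ({w}ᶜ : Set V)} {T T' : SimpleGraph ({w}ᶜ : Set V)} :
    addLeaf w u T = addLeaf w u' T' ↔ u = u' ∧ T = T' := by
  refine ⟨fun h => ⟨Subtype.ext ?_, by rw [← induce_addLeaf u T, h, induce_addLeaf]⟩, ?_⟩
  · exact Set.singleton_injective
      ((neighborSet_addLeaf u T).symm.trans (h ▸ neighborSet_addLeaf u' T'))
  · rintro ⟨rfl, rfl⟩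
    rfl

lemma exists_addLeaf_eq (h : vdeg G w = 1) : ∃ u T, addLeaf w u T = G := by
  obtain ⟨u, hu⟩ := Set.ncard_eq_one.1 h
  have huw : u ∈ ({w}ᶜ : Set V) := (show u ∈ G.neighborSet w from hu ▸ rfl).ne'
  exact ⟨⟨u, huw⟩, _, addLeaf_induce hu huw⟩

lemma card_isTree_vdeg_add_ite_eq {e : V → ℕ} {u : V} [DecidableEq V] (hu : e u ≠ 0) :
    Nat.card {T : SimpleGraph V //
        T.IsTree ∧ ∀ x, vdeg T x + (if x = u then 1 else 0) = e x + 1} =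
      Nat.card {T : SimpleGraph V // T.IsTree ∧
        ∀ x, vdeg T x = Function.update e u (e u - 1) x + 1} := by
  refine Nat.card_congr (Equiv.subtypeEquivRight fun T =>
    and_congr_right fun _ => forall_congr' fun x => ?_)
  rcases eq_or_ne x u with rfl | hx
  · simp only [if_pos, Function.update_self]
    omega
  · simp [hx]

section Counting

variable [Fintype V] [DecidableEq V]

lemma card_isTree_vdeg_add_ite_eq_zero [Nontrivial V] {e : V → ℕ} {u : V} (hu : e u = 0) :
    Nat.card {T : SimpleGraph V //
        T.IsTree ∧ ∀ x, vdeg T x + (if x = u then 1 else 0) = e x + 1} = 0 := by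
  rw [Nat.card_eq_zero]
  refine Or.inl ⟨fun ⟨T, hT, hdeg⟩ => ?_⟩
  have := hdeg u
  have := hT.connected.preconnected.vdeg_pos u
  simp_all

lemma card_eq_sum_card_addLeaf (w : V) (P : SimpleGraph V → Prop)
    (hP : ∀ G, P G → vdeg G w = 1) :
    Nat.card {G // P G} = ∑ u : ({w}ᶜ : Set V), Nat.card {T // P (addLeaf w u T)} := by
  rw [← Nat.card_sigma]
  refine (Nat.card_congr (Equiv.ofBijective (fun p => ⟨addLeaf w p.1 p.2.1, p.2.2⟩)
    ⟨?_, ?_⟩)).symm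
  · rintro ⟨u, T, hT⟩ ⟨u', T', hT'⟩ h
    obtain ⟨rfl, rfl⟩ := addLeaf_inj.1 (congrArg Subtype.val h)
    rfl
  · rintro ⟨G, hG⟩
    obtain ⟨u, T, rfl⟩ := exists_addLeaf_eq (hP G hG)
    exact ⟨⟨u, T, hG⟩, rfl⟩

lemma card_isTree_vdeg_eq_sum (e : V → ℕ) (hw : e w = 0) :
    Nat.card {G : SimpleGraph V // G.IsTree ∧ ∀ v, vdeg G v = e v + 1} =
      ∑ u : ({w}ᶜ : Set V), Nat.card {T : SimpleGraph ({w}ᶜ : Set V) //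
        T.IsTree ∧ ∀ x, vdeg T x + (if x = u then 1 else 0) = e x + 1} := by
  rw [card_eq_sum_card_addLeaf w _ fun G hG => by rw [hG.2, hw]]
  refine sum_congr rfl fun u _ => Nat.card_congr (Equiv.subtypeEquivRight fun T => ?_)
  rw [isTree_iff_induce_compl_singleton (neighborSet_addLeaf u T), induce_addLeaf]
  refine and_congr_right fun _ => ⟨fun h x => ?_, fun h v => ?_⟩
  · rw [← vdeg_addLeaf, h]
  · by_cases hv : v = w
    · rw [hv, hw, vdeg, neighborSet_addLeaf, Set.ncard_singleton]
    · exact (vdeg_addLeaf u T ⟨v, hv⟩).trans (h ⟨v, hv⟩)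

theorem card_isTree_vdeg_eq_multinomial (e : V → ℕ) (he : ∑ v, e v + 2 = Fintype.card V) :
    Nat.card {G : SimpleGraph V // G.IsTree ∧ ∀ v, vdeg G v = e v + 1} =
      Nat.multinomial univ e := by
  obtain ⟨k, hk⟩ : ∃ k, ∑ v, e v = k := ⟨_, rfl⟩
  induction k using Nat.strong_induction_on generalizing V with
  | _ k ih =>
  obtain ⟨w, hw⟩ := exists_eq_zero_of_sum_lt_card e (by omega)
  have hout : ∀ v ∉ ({w}ᶜ : Set V), e v = 0 := fun v hv => by
    rw [Set.notMem_compl_iff, Set.mem_singleton_iff] at hv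
    rw [hv, hw]
  have hW : Fintype.card ({w}ᶜ : Set V) = k + 1 := by
    rw [Fintype.card_compl_set, Set.card_singleton]
    omega
  have hsumW : ∑ x : ({w}ᶜ : Set V), e x = k := by
    rw [← hk, sum_subtype_of_eq_zero e hout]
  rw [card_isTree_vdeg_eq_sum e hw, ← Nat.multinomial_subtype_of_eq_zero e hout]
  rcases k with _ | k
  · have := Fintype.card_le_one_iff_subsingleton.1 hW.le
    have he0 : ∀ v, e v = 0 := fun v => sum_eq_zero_iff.1 hk v (mem_univ v)
    have hterm : ∀ u : ({w}ᶜ : Set V), Nat.card {T : SimpleGraph ({w}ᶜ : Set V) //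
        T.IsTree ∧ ∀ x, vdeg T x + (if x = u then 1 else 0) = e x + 1} = 1 := fun u => by
      have : Nonempty ({w}ᶜ : Set V) := ⟨u⟩
      simp [Subsingleton.elim _ u, vdeg_of_subsingleton, he0, IsTree.of_subsingleton]
    rw [sum_congr rfl fun u _ => hterm u]
    simp [hW, Nat.multinomial, he0]
  · have := Fintype.one_lt_card_iff_nontrivial.1 (by omega : 1 < Fintype.card ({w}ᶜ : Set V))
    rw [Nat.multinomial_eq_sum_multinomial_update _ _ (by omega), sum_filter]
    refine sum_congr rfl fun u _ => ?_
    split_ifs with hu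
    · have hsum : ∑ x, Function.update (fun x : ({w}ᶜ : Set V) => e x) u (e u - 1) x = k := by
        rw [sum_update_of_mem (mem_univ u), sdiff_singleton_eq_erase]
        have := add_sum_erase univ (fun x : ({w}ᶜ : Set V) => e x) (mem_univ u)
        omega
      rw [card_isTree_vdeg_add_ite_eq (e := fun x : ({w}ᶜ : Set V) => e x) hu]
      exact ih k (by omega) _ (by omega) hsum
    · exact card_isTree_vdeg_add_ite_eq_zero (not_not.1 hu)

theorem card_isTree_vdeg_eq_of_card_fiber [Nonempty V] {I : Finset ℕ} (hI : ∀ i ∈ I, i ≠ 0)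
    (m : ℕ → ℕ) (hm : ∑ i ∈ I, i * m i = 2 * Fintype.card V - 2) (d : V → I)
    (hd : ∀ i, Nat.card {v // d v = i} = m i) :
    (Nat.card {G : SimpleGraph V // G.IsTree ∧ ∀ v, vdeg G v = d v} : ℚ) =
      (Fintype.card V - 2)! / ∏ i ∈ I, ((i - 1)! : ℚ) ^ m i := by
  have hd1 : ∀ v, 1 ≤ (d v : ℕ) := fun v => Nat.one_le_iff_ne_zero.2 (hI _ (d v).2)
  have hdsum : ∑ v, (d v : ℕ) = 2 * Fintype.card V - 2 := by
    rw [sum_comp_eq_sum_nsmul_card_fiber d fun i : I => (i : ℕ), ← hm,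
      ← sum_coe_sort I fun i => i * m i]
    simp only [hd, smul_eq_mul, mul_comm]
  have hsum : ∑ v, ((d v : ℕ) - 1) + Fintype.card V = ∑ v, (d v : ℕ) := by
    rw [← card_univ, card_eq_sum_ones, ← sum_add_distrib]
    exact sum_congr rfl fun v _ => Nat.sub_add_cancel (hd1 v)
  have hprod : ∏ v, (((d v : ℕ) - 1)! : ℚ) = ∏ i ∈ I, ((i - 1)! : ℚ) ^ m i := by
    rw [prod_comp_eq_prod_pow_card_fiber d fun i : I => (((i : ℕ) - 1)! : ℚ)]
    simp only [hd]
    exact prod_coe_sort I fun i => ((i - 1)! : ℚ) ^ m i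
  have := Fintype.card_pos (α := V)
  have hcard := card_isTree_vdeg_eq_multinomial (fun v => (d v : ℕ) - 1) (by omega)
  simp only [fun v => Nat.sub_add_cancel (hd1 v)] at hcard
  rw [hcard, Nat.cast_multinomial, show ∑ v, ((d v : ℕ) - 1) = Fintype.card V - 2 by omega, hprod]

end Counting

lemma card_isTree_profile_eq_card_sigma [Fintype V] [Nontrivial V] {n : ℕ}
    (hV : Fintype.card V = n) (m : ℕ → ℕ) :
    Nat.card {G : SimpleGraph V // G.IsTree ∧
        ∀ i ∈ Icc 1 (n - 1), {v | vdeg G v = i}.ncard = m i} =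
      Nat.card (Σ d : {d : V → Icc 1 (n - 1) // ∀ i, Nat.card {v // d v = i} = m i},
        {G : SimpleGraph V // G.IsTree ∧ ∀ v, vdeg G v = d.1 v}) := by
  subst hV
  have hfiber : ∀ (G : SimpleGraph V) (d : V → Icc 1 (Fintype.card V - 1)),
      (∀ v, vdeg G v = d v) →
        ∀ i : Icc 1 (Fintype.card V - 1), {v | vdeg G v = i}.ncard = Nat.card {v // d v = i} :=
    fun G d hd i => Nat.card_congr (Equiv.subtypeEquivRight fun v => by
      rw [← Subtype.coe_inj, ← hd]; rfl)
  refine (Nat.card_congr (Equiv.ofBijective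
    (fun p => ⟨p.2.1, p.2.2.1, fun i hi => (hfiber _ _ p.2.2.2 ⟨i, hi⟩).trans (p.1.2 ⟨i, hi⟩)⟩)
    ⟨?_, ?_⟩)).symm
  · rintro ⟨d, G, hG, hd⟩ ⟨d', G', hG', hd'⟩ h
    obtain rfl : G = G' := congrArg Subtype.val h
    exact Sigma.subtype_ext (Subtype.ext (funext fun v => Subtype.ext ((hd v).symm.trans (hd' v))))
      rfl
  · rintro ⟨G, hG, hprof⟩
    let d : V → Icc 1 (Fintype.card V - 1) := fun v => ⟨vdeg G v, hG.vdeg_mem_Icc v⟩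
    exact ⟨⟨⟨d, fun i => (hfiber G d (fun _ => rfl) i).symm.trans (hprof i i.2)⟩, G, hG,
      fun _ => rfl⟩, rfl⟩

end SimpleGraph

open SimpleGraph

/-- The number of labeled trees on `{1,…,n}` with exactly `m i` vertices of degree `i`
for every `1 ≤ i ≤ n-1` is `((n-2)! / ∏ ((i-1)!)^(m i)) * (n! / ∏ (m i)!)`. -/
theorem count_trees_with_degree_specification (n : ℕ) (hn : 2 ≤ n) (m : ℕ → ℕ)
    (hsum : ∑ i ∈ Finset.Icc 1 (n - 1), m i = n)
    (hdegsum : ∑ i ∈ Finset.Icc 1 (n - 1), i * m i = 2 * n - 2) :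
    (Nat.card {G : SimpleGraph (Fin n) // G.IsTree ∧
        ∀ i ∈ Finset.Icc 1 (n - 1), {v : Fin n | vdeg G v = i}.ncard = m i} : ℚ) =
      ((n - 2).factorial : ℚ) /
          (∏ i ∈ Finset.Icc 1 (n - 1), ((i - 1).factorial : ℚ) ^ (m i)) *
        ((n.factorial : ℚ) / ∏ i ∈ Finset.Icc 1 (n - 1), ((m i).factorial : ℚ)) := by
  classical
  set I := Icc 1 (n - 1)
  have : Nontrivial (Fin n) := Fin.nontrivial_iff_two_le.2 hn
  have hpos : ∀ i ∈ I, i ≠ 0 := fun i hi => Nat.one_le_iff_ne_zero.1 (mem_Icc.1 hi).1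
  rw [card_isTree_profile_eq_card_sigma (Fintype.card_fin n) m, Nat.card_sigma, Nat.cast_sum,
    sum_congr rfl fun d _ => card_isTree_vdeg_eq_of_card_fiber hpos m
      (by rwa [Fintype.card_fin]) d.1 d.2, sum_const,
    card_univ, nsmul_eq_mul, ← Nat.card_eq_fintype_card, card_fun_card_fiber_eq_multinomial
      (fun i : I => m i) (by rw [sum_coe_sort I m, hsum, Fintype.card_fin]),
    Nat.cast_multinomial, sum_coe_sort I m, hsum, prod_coe_sort I fun i => ((m i)! : ℚ),
    Fintype.card_fin]
  ring
end

section
/- For every sequence m(n) of positive integers with liminf_{n→∞} m(n)/n > 0 and 2·m(n) ≤ n, the ratio [ n! / ( C(C(n,2), m(n)) · (n − m(n))! ) ] / [ (2π·n·m(n)/(n − m(n)))^{1/2} · 2^{m(n)} · n^{n} · m(n)^{m(n)} · n^{−2m(n)} · (n − m(n))^{−(n − m(n))} · exp( −2m(n) + m(n)/n + m(n)²/n² ) ] tends to 1 as n → ∞. -/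
open Filter Real

/-!
Write the numerator as `n! m! / ((n - m)! (N)_m)` with `N = C(n, 2)` and `(N)_m` the falling
factorial. Since `m → ∞` and `n - m ≥ n / 2 → ∞`, Stirling's formula applies to all three
factorials. For the falling factorial, `2 (N - i) = n² (1 - x_i)` with
`x_i = (n + 2i) / n² ≤ 2 / n`; as `log (1 - x) = -x + O(x²)` and `∑ x_i² = O(1/n)`, we get
`∏ (1 - x_i) ~ exp (-∑ x_i)`, and `∑ x_i = m/n + m²/n² - m/n²` with `m / n² → 0`.
-/

open Asymptotics Finset Nat Topology

section ProductEstimate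

variable {α ι : Type*}

lemma abs_log_one_sub_add_le {x : ℝ} (hx : |x| ≤ 1 / 2) : |log (1 - x) + x| ≤ 2 * x ^ 2 := by
  have h := abs_log_sub_add_sum_range_le (by linarith : |x| < 1) 1
  simp only [range_one, sum_singleton, zero_add, pow_one, cast_zero, div_one] at h
  calc |log (1 - x) + x| = |x + log (1 - x)| := by rw [add_comm]
    _ ≤ |x| ^ 2 / (1 - |x|) := h
    _ ≤ 2 * x ^ 2 := by
      rw [div_le_iff₀ (by linarith), sq_abs]
      nlinarith [mul_nonneg (sq_nonneg x) (by linarith : 0 ≤ 1 - 2 * |x|)]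

lemma abs_sum_log_one_sub_add_le (s : Finset ι) (x : ι → ℝ) (hx : ∀ i ∈ s, |x i| ≤ 1 / 2) :
    |∑ i ∈ s, (log (1 - x i) + x i)| ≤ 2 * ∑ i ∈ s, x i ^ 2 := by
  rw [mul_sum]
  exact (abs_sum_le_sum_abs _ _).trans (sum_le_sum fun i hi => abs_log_one_sub_add_le (hx i hi))

lemma prod_one_sub_mul_exp_sum (s : Finset ι) (x : ι → ℝ) (hx : ∀ i ∈ s, x i < 1) :
    (∏ i ∈ s, (1 - x i)) * exp (∑ i ∈ s, x i) = exp (∑ i ∈ s, (log (1 - x i) + x i)) := by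
  rw [sum_add_distrib, exp_add]
  congr 1
  rw [exp_sum]
  exact prod_congr rfl fun i hi => (exp_log (by linarith [hx i hi])).symm

lemma isEquivalent_prod_one_sub_exp_neg_sum {l : Filter α} (s : α → Finset ι) (x : α → ι → ℝ)
    (hx : ∀ᶠ a in l, ∀ i ∈ s a, |x a i| ≤ 1 / 2)
    (hsq : Tendsto (fun a => ∑ i ∈ s a, x a i ^ 2) l (𝓝 0)) :
    (fun a => ∏ i ∈ s a, (1 - x a i)) ~[l] fun a => exp (-∑ i ∈ s a, x a i) := by
  apply isEquivalent_of_tendsto_one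
  have hlog : Tendsto (fun a => ∑ i ∈ s a, (log (1 - x a i) + x a i)) l (𝓝 0) := by
    refine squeeze_zero_norm' ?_ (by simpa using hsq.const_mul 2)
    filter_upwards [hx] with a ha using abs_sum_log_one_sub_add_le _ _ ha
  have hexp := (continuous_exp.tendsto 0).comp hlog
  rw [exp_zero] at hexp
  refine hexp.congr' ?_
  filter_upwards [hx] with a ha
  rw [Pi.div_apply, exp_neg, div_inv_eq_mul, prod_one_sub_mul_exp_sum]
  · rfl
  · exact fun i hi => by linarith [(abs_le.mp (ha i hi)).2]

lemma isEquivalent_exp_of_tendsto_sub {l : Filter α} {f g : α → ℝ}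
    (h : Tendsto (f - g) l (𝓝 0)) :
    (fun a => exp (f a)) ~[l] fun a => exp (g a) := by
  apply isEquivalent_of_tendsto_one
  simpa [Function.comp_def, ← exp_sub, Pi.div_def] using (continuous_exp.tendsto 0).comp h

end ProductEstimate

lemma tendsto_atTop_of_liminf_div_pos {m : ℕ → ℕ}
    (h : 0 < atTop.liminf (fun n : ℕ => (m n : ℝ) / n)) : Tendsto m atTop atTop := by
  obtain ⟨c, hc0, hc⟩ := exists_between h
  have hev : ∀ᶠ n in atTop, c < (m n : ℝ) / n :=
    eventually_lt_of_lt_liminf hc (isBoundedUnder_of ⟨0, fun n => by positivity⟩)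
  rw [← tendsto_natCast_atTop_iff (R := ℝ)]
  refine tendsto_atTop_mono' atTop ?_ (tendsto_natCast_atTop_atTop.const_mul_atTop hc0)
  filter_upwards [hev, eventually_gt_atTop 0] with n hn hn0
  exact ((lt_div_iff₀ (by positivity)).mp hn).le

lemma tendsto_sub_atTop_of_two_mul_le {m : ℕ → ℕ} (h : ∀ n, 2 * m n ≤ n) :
    Tendsto (fun n => n - m n) atTop atTop :=
  tendsto_atTop_atTop.mpr fun b => ⟨2 * b, fun n hn => by have := h n; omega⟩

noncomputable def stirlingApprox (k : ℕ) : ℝ := √(2 * k * π) * (k / exp 1) ^ k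

lemma stirlingApprox_eq_sqrt_mul_pow_mul_exp (k : ℕ) :
    stirlingApprox k = √(2 * π * k) * k ^ k * exp (-k) := by
  rw [stirlingApprox, div_pow, ← exp_nat_mul, mul_one, exp_neg, mul_right_comm 2]
  ring

lemma stirlingApprox_pos {k : ℕ} (hk : k ≠ 0) : 0 < stirlingApprox k := by
  unfold stirlingApprox
  have : (0 : ℝ) < k := by positivity
  positivity

lemma cast_choose_eq_descFactorial_div (N m : ℕ) :
    (N.choose m : ℝ) = N.descFactorial m / m ! := by
  rw [descFactorial_eq_factorial_mul_choose, cast_mul, mul_div_cancel_left₀ _ (by positivity)]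

lemma cast_descFactorial_choose_two {n m : ℕ} (hn : n ≠ 0) (hm : m ≤ n.choose 2) :
    ((n.choose 2).descFactorial m : ℝ) =
      ((n : ℝ) ^ 2 / 2) ^ m * ∏ i ∈ range m, (1 - (n + 2 * i) / (n : ℝ) ^ 2) := by
  rw [descFactorial_eq_prod_range, cast_prod, ← card_range m, ← prod_const, card_range,
    ← prod_mul_distrib]
  refine prod_congr rfl fun i hi => ?_
  have hi : i ≤ n.choose 2 := (mem_range.mp hi).le.trans hm
  rw [cast_sub hi, cast_choose_two]
  field_simp
  ring

lemma sum_range_add_two_mul_div (n m : ℕ) :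
    ∑ i ∈ range m, ((n : ℝ) + 2 * i) / n ^ 2 = (m / n + m ^ 2 / n ^ 2 - m / n ^ 2 : ℝ) := by
  rcases eq_or_ne (n : ℝ) 0 with hn | hn
  · simp [hn]
  induction m with
  | zero => simp
  | succ k ih =>
    rw [sum_range_succ, ih]
    field_simp
    push_cast
    ring

lemma add_two_mul_div_sq_le {n m i : ℕ} (h : 2 * m ≤ n) (hi : i < m) :
    ((n : ℝ) + 2 * i) / n ^ 2 ≤ 2 / n := by
  have hn : (0 : ℝ) < n := by exact_mod_cast (by omega : 0 < n)
  have hin : (2 * i : ℝ) ≤ n := by exact_mod_cast (by omega : 2 * i ≤ n)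
  rw [div_le_div_iff₀ (by positivity) hn]
  nlinarith

lemma sum_range_sq_add_two_mul_div_le {n m : ℕ} (h : 2 * m ≤ n) :
    ∑ i ∈ range m, (((n : ℝ) + 2 * i) / n ^ 2) ^ 2 ≤ 4 / (n : ℝ) := by
  have hx : ∀ i ∈ range m, 0 ≤ ((n : ℝ) + 2 * i) / n ^ 2 := fun i _ => by positivity
  calc ∑ i ∈ range m, (((n : ℝ) + 2 * i) / n ^ 2) ^ 2 ≤ ∑ i ∈ range m, (2 / (n : ℝ)) ^ 2 :=
        sum_le_sum fun i hi =>
          pow_le_pow_left₀ (hx i hi) (add_two_mul_div_sq_le h (mem_range.mp hi)) 2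
    _ = (m : ℝ) * 4 / n ^ 2 := by rw [sum_const, card_range, nsmul_eq_mul]; ring
    _ ≤ 4 / n := by
      rcases eq_or_ne (n : ℝ) 0 with hn | hn
      · simp [hn]
      have hm : (m : ℝ) ≤ n := by exact_mod_cast (by omega : m ≤ n)
      rw [div_le_div_iff₀ (by positivity) (by positivity)]
      nlinarith [sq_nonneg (n : ℝ)]

lemma isEquivalent_descFactorial_choose_two {m : ℕ → ℕ} (h2m : ∀ n, 2 * m n ≤ n) :
    (fun n : ℕ => ((n.choose 2).descFactorial (m n) : ℝ)) ~[atTop]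
      fun n : ℕ => ((n : ℝ) ^ 2 / 2) ^ m n * exp (-(m n / n + (m n : ℝ) ^ 2 / n ^ 2)) := by
  set x : ℕ → ℕ → ℝ := fun n i => ((n : ℝ) + 2 * i) / n ^ 2 with hx
  have hm_le : ∀ n, (m n : ℝ) ≤ n := fun n => by exact_mod_cast (by have := h2m n; omega)
  have hsmall : ∀ᶠ n in atTop, ∀ i ∈ range (m n), |x n i| ≤ 1 / 2 := by
    filter_upwards [eventually_ge_atTop 4] with n hn i hi
    have hn : (4 : ℝ) ≤ n := by exact_mod_cast hn
    rw [abs_of_nonneg (by positivity)]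
    refine (add_two_mul_div_sq_le (h2m n) (mem_range.mp hi)).trans ?_
    rw [div_le_div_iff₀ (by positivity) two_pos]
    linarith
  have hsq : Tendsto (fun n => ∑ i ∈ range (m n), x n i ^ 2) atTop (𝓝 0) :=
    squeeze_zero (fun n => by positivity) (fun n => sum_range_sq_add_two_mul_div_le (h2m n))
      (tendsto_const_div_atTop_nhds_zero_nat 4)
  have hcorr : Tendsto (fun n => (m n : ℝ) / n ^ 2) atTop (𝓝 0) := by
    refine squeeze_zero (fun n => by positivity) (fun n => ?_)
      tendsto_one_div_atTop_nhds_zero_nat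
    rcases eq_or_ne (n : ℝ) 0 with hn | hn
    · simp [hn]
    rw [div_le_div_iff₀ (by positivity) (by positivity)]
    nlinarith [hm_le n]
  have hexp : (fun n => exp (-∑ i ∈ range (m n), x n i)) ~[atTop]
      fun n => exp (-(m n / n + (m n : ℝ) ^ 2 / n ^ 2)) := by
    refine isEquivalent_exp_of_tendsto_sub (hcorr.congr fun n => ?_)
    simp only [Pi.sub_apply, hx, sum_range_add_two_mul_div]
    ring
  have hprod := isEquivalent_prod_one_sub_exp_neg_sum (fun n => range (m n)) x hsmall hsq
  refine (IsEquivalent.refl.mul (hprod.trans hexp)).congr_left ?_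
  filter_upwards [eventually_ge_atTop 4] with n hn
  refine (cast_descFactorial_choose_two (by omega) ?_).symm
  have hn : (4 : ℝ) ≤ n := by exact_mod_cast hn
  have : (m n : ℝ) ≤ (n.choose 2 : ℕ) := by rw [cast_choose_two]; nlinarith [hm_le n]
  exact_mod_cast this

lemma stirling_ratio_denominator_eq {n m : ℕ} (hm : m ≠ 0) (h : 2 * m ≤ n) :
    √(2 * π * n * m / ((n : ℝ) - m)) * 2 ^ m * (n : ℝ) ^ n * (m : ℝ) ^ m / (n : ℝ) ^ (2 * m) /
        ((n : ℝ) - m) ^ (n - m) * exp (-2 * (m : ℝ) + m / n + (m : ℝ) ^ 2 / (n : ℝ) ^ 2)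
      = stirlingApprox n * stirlingApprox m / stirlingApprox (n - m) /
        (((n : ℝ) ^ 2 / 2) ^ m * exp (-(m / n + (m : ℝ) ^ 2 / n ^ 2))) := by
  have hm0 : (0 : ℝ) < m := by positivity
  have hnm : (0 : ℝ) < n - m := by
    have : (2 * m : ℝ) ≤ n := by exact_mod_cast h
    linarith
  have hn0 : (0 : ℝ) < n := by linarith
  have hsqrt :
      √(2 * π * n) * √(2 * π * m) = √(2 * π * n * m / (n - m)) * √(2 * π * (n - m)) := by
    rw [← sqrt_mul (by positivity), ← sqrt_mul (by positivity)]
    congr 1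
    field_simp
  have hexp : exp (-n) * exp (-m) = exp (-2 * m) * exp (-(n - m : ℝ)) := by
    rw [← exp_add, ← exp_add]
    ring_nf
  have hnum : stirlingApprox n * stirlingApprox m = √(2 * π * n * m / (n - m)) *
      √(2 * π * (n - m)) * n ^ n * m ^ m * exp (-2 * m) * exp (-(n - m : ℝ)) := by
    rw [stirlingApprox_eq_sqrt_mul_pow_mul_exp, stirlingApprox_eq_sqrt_mul_pow_mul_exp,
      mul_assoc _ (exp (-2 * m)), ← hexp, ← hsqrt]
    ring
  rw [hnum, stirlingApprox_eq_sqrt_mul_pow_mul_exp, cast_sub (by omega), pow_mul, div_pow,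
    add_assoc, exp_add, exp_neg (m / n + (m : ℝ) ^ 2 / n ^ 2)]
  field_simp

/-- Stirling-type estimate: for `m(n)` with `liminf m(n)/n > 0` and `2m(n) ≤ n`,
`n!/(C(C(n,2),m)·(n-m)!) ∼ (2πnm/(n-m))^{1/2} 2^m n^n m^m n^{-2m} (n-m)^{-(n-m)}
  · exp(-2m + m/n + m²/n²)`. -/
theorem stirling_ratio (m : ℕ → ℕ)
    (h2m : ∀ n, 2 * m n ≤ n)
    (hliminf : 0 < Filter.atTop.liminf (fun n : ℕ => (m n : ℝ) / (n : ℝ))) :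
    Tendsto
      (fun n : ℕ =>
        ((n.factorial : ℝ) /
            (((n.choose 2).choose (m n) : ℝ) * (((n - m n).factorial : ℝ)))) /
          (Real.sqrt (2 * π * n * (m n) / ((n : ℝ) - m n)) *
            2 ^ (m n) * (n : ℝ) ^ n * (m n : ℝ) ^ (m n) /
            (n : ℝ) ^ (2 * m n) / ((n : ℝ) - m n) ^ (n - m n) *
            Real.exp (-2 * (m n : ℝ) + (m n : ℝ) / n + (m n : ℝ) ^ 2 / (n : ℝ) ^ 2)))
      atTop (nhds 1) := by
  have hm : Tendsto m atTop atTop := tendsto_atTop_of_liminf_div_pos hliminf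
  have hS : (fun k : ℕ => (k ! : ℝ)) ~[atTop] stirlingApprox :=
    Stirling.factorial_isEquivalent_stirling
  have hequiv : (fun n : ℕ => (n ! : ℝ) * (m n)! /
      ((n - m n)! * (n.choose 2).descFactorial (m n))) ~[atTop]
      fun n => stirlingApprox n * stirlingApprox (m n) / (stirlingApprox (n - m n) *
        (((n : ℝ) ^ 2 / 2) ^ m n * exp (-(m n / n + (m n : ℝ) ^ 2 / n ^ 2)))) :=
    (hS.mul (hS.comp_tendsto hm)).div
      ((hS.comp_tendsto (tendsto_sub_atTop_of_two_mul_le h2m)).mul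
        (isEquivalent_descFactorial_choose_two h2m))
  have hm0 : ∀ᶠ n in atTop, m n ≠ 0 := hm.eventually_ne_atTop 0
  refine ((isEquivalent_iff_tendsto_one ?_).mp hequiv).congr' ?_
  · filter_upwards [hm0] with n hn
    have hn0 : 0 < n := by have := h2m n; omega
    have := stirlingApprox_pos hn
    have := stirlingApprox_pos hn0.ne'
    have := stirlingApprox_pos (k := n - m n) (by have := h2m n; omega)
    positivity
  · filter_upwards [hm0] with n hn
    rw [Pi.div_apply, stirling_ratio_denominator_eq hn (h2m n), cast_choose_eq_descFactorial_div]
    field_simp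
end

section
/- For every sequence m(n) of nonnegative integers with m(n) ≤ n for all n, one has C(C(n,2), m(n)) · 2^{m(n)} · m(n)! · n^{−2m(n)} · exp( m(n)/n + m(n)²/n² ) → 1 as n → ∞. -/
/-!
With `N = C(n, 2)` and `a_i = (n + 2i) / n²` one has
`2^k · k! · C(N, k) / n^{2k} = ∏_{i<k} (1 - a_i)`, because `2 (N - i) = n² (1 - a_i)`,
and `∑_{i<k} a_i = k/n + k²/n² - k/n²`. So the quantity is
`exp(k/n²) · ∏_{i<k} (1 - a_i) e^{a_i}`. For `k ≤ n` we have `0 ≤ a_i ≤ 3/n`, and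
`e^{-2a²} ≤ (1 - a) e^a ≤ 1` on `[0, 1/2]` squeezes the product between `exp(-18/n)` and `1`,
while `k/n² ≤ 1/n`; both factors tend to `1`.
-/

open Filter Finset Real Topology

theorem Nat.cast_descFactorial_eq_prod_range {R : Type*} [CommRing R] (n k : ℕ) :
    (n.descFactorial k : R) = ∏ j ∈ range k, ((n : R) - j) := by
  rw [← descPochhammer_eval_eq_descFactorial, descPochhammer_eval_eq_prod_range]

theorem choose_choose_two_mul_div_eq_prod (n k : ℕ) (hn : n ≠ 0) :
    ((n.choose 2).choose k : ℝ) * 2 ^ k * (k.factorial : ℝ) / (n : ℝ) ^ (2 * k) =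
      ∏ i ∈ range k, (1 - ((n : ℝ) + 2 * i) / (n : ℝ) ^ 2) := by
  have hn2 : (n : ℝ) ^ 2 ≠ 0 := by positivity
  rw [mul_right_comm, mul_comm _ (k.factorial : ℝ), ← Nat.cast_mul,
    ← Nat.descFactorial_eq_factorial_mul_choose, Nat.cast_descFactorial_eq_prod_range,
    Nat.cast_choose_two, pow_mul]
  have factor : ∀ i ∈ range k, 1 - ((n : ℝ) + 2 * i) / (n : ℝ) ^ 2 =
      ((n : ℝ) * (n - 1) / 2 - i) * 2 * ((n : ℝ) ^ 2)⁻¹ := by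
    intro i _
    field_simp
    ring
  rw [prod_congr rfl factor, prod_mul_distrib, prod_mul_distrib, prod_const, prod_const,
    card_range, div_eq_mul_inv, inv_pow]

theorem sum_range_add_two_mul_div_sq (x : ℝ) (k : ℕ) :
    ∑ i ∈ range k, (x + 2 * i) / x ^ 2 = k / x + k ^ 2 / x ^ 2 - k / x ^ 2 := by
  have gauss : ∑ i ∈ range k, (i : ℝ) * 2 = k ^ 2 - k := by
    induction k with
    | zero => simp
    | succ k ih => rw [sum_range_succ, ih]; push_cast; ring
  rw [← sum_div, sum_add_distrib, sum_const, card_range, nsmul_eq_mul]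
  simp_rw [mul_comm (2 : ℝ)]
  rw [gauss]
  rcases eq_or_ne x 0 with rfl | hx
  · simp
  · field_simp; ring

theorem one_sub_mul_exp_le_one (a : ℝ) : (1 - a) * exp a ≤ 1 := by
  calc (1 - a) * exp a ≤ exp (-a) * exp a := by gcongr; exact one_sub_le_exp_neg a
    _ = 1 := by rw [← exp_add, neg_add_cancel, exp_zero]

theorem exp_neg_two_mul_sq_le_one_sub_mul_exp {a : ℝ} (ha : a ≤ 1 / 2) :
    exp (-2 * a ^ 2) ≤ (1 - a) * exp a := by
  -- `(1 - a) (1 + a + 2a²) = 1 + a² (1 - 2a) ≥ 1`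
  have key : 1 ≤ (1 - a) * exp (a + 2 * a ^ 2) := by
    have h : (0 : ℝ) ≤ 1 - 2 * a := by linarith
    nlinarith [add_one_le_exp (a + 2 * a ^ 2), mul_nonneg (sq_nonneg a) h]
  calc exp (-2 * a ^ 2) ≤ (1 - a) * exp (a + 2 * a ^ 2) * exp (-2 * a ^ 2) :=
        le_mul_of_one_le_left (exp_pos _).le key
    _ = (1 - a) * exp a := by rw [mul_assoc, ← exp_add]; ring_nf

theorem exp_neg_le_prod_one_sub_mul_exp {ι : Type*} (s : Finset ι) (a : ι → ℝ) {c : ℝ}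
    (ha : ∀ i ∈ s, 0 ≤ a i ∧ a i ≤ c) (hc : c ≤ 1 / 2) :
    exp (-2 * #s * c ^ 2) ≤ ∏ i ∈ s, (1 - a i) * exp (a i) := by
  calc exp (-2 * #s * c ^ 2) = ∏ _i ∈ s, exp (-2 * c ^ 2) := by
        rw [prod_const, ← exp_nat_mul]; ring_nf
    _ ≤ ∏ i ∈ s, exp (-2 * a i ^ 2) := by
        refine prod_le_prod (fun _ _ => (exp_pos _).le) fun i hi => exp_le_exp.2 ?_
        nlinarith [ha i hi]
    _ ≤ ∏ i ∈ s, (1 - a i) * exp (a i) :=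
        prod_le_prod (fun _ _ => (exp_pos _).le) fun i hi =>
          exp_neg_two_mul_sq_le_one_sub_mul_exp ((ha i hi).2.trans hc)

theorem add_two_mul_div_sq_mem_Icc {x : ℝ} (hx : 0 < x) {i k : ℕ} (hi : i < k)
    (hk : (k : ℝ) ≤ x) :
    (x + 2 * i) / x ^ 2 ∈ Set.Icc 0 (3 / x) := by
  have hi' : (i : ℝ) + 1 ≤ k := by exact_mod_cast hi
  constructor
  · positivity
  · rw [div_le_div_iff₀ (by positivity) hx]
    nlinarith

theorem exp_neg_div_le_prod_one_sub_mul_exp {x : ℝ} (hx : 6 ≤ x) {k : ℕ}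
    (hk : (k : ℝ) ≤ x) :
    exp (-18 / x) ≤
      ∏ i ∈ range k, (1 - (x + 2 * i) / x ^ 2) * exp ((x + 2 * i) / x ^ 2) := by
  have hx0 : 0 < x := by linarith
  refine le_trans ?_ (exp_neg_le_prod_one_sub_mul_exp _ _
    (fun i hi => add_two_mul_div_sq_mem_Icc hx0 (mem_range.1 hi) hk) ?_)
  · rw [exp_le_exp, card_range, div_pow, mul_div_assoc', div_le_div_iff₀ hx0 (by positivity)]
    nlinarith
  · rw [div_le_div_iff₀ hx0 (by norm_num)]
    linarith

theorem prod_one_sub_mul_exp_le_one {x : ℝ} (hx : 6 ≤ x) {k : ℕ} (hk : (k : ℝ) ≤ x) :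
    ∏ i ∈ range k, (1 - (x + 2 * i) / x ^ 2) * exp ((x + 2 * i) / x ^ 2) ≤ 1 := by
  refine prod_le_one (fun i hi => ?_) fun i _ => one_sub_mul_exp_le_one _
  have hmem := add_two_mul_div_sq_mem_Icc (by linarith) (mem_range.1 hi) hk
  have : 3 / x ≤ 1 := by rw [div_le_one (by linarith)]; linarith
  exact mul_nonneg (by linarith [hmem.2]) (exp_pos _).le

theorem choose_choose_two_mul_exp_eq (n k : ℕ) (hn : n ≠ 0) :
    ((n.choose 2).choose k : ℝ) * 2 ^ k * (k.factorial : ℝ) / (n : ℝ) ^ (2 * k) *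
        exp ((k : ℝ) / n + (k : ℝ) ^ 2 / (n : ℝ) ^ 2) =
      exp ((k : ℝ) / (n : ℝ) ^ 2) *
        ∏ i ∈ range k, (1 - ((n : ℝ) + 2 * i) / (n : ℝ) ^ 2) *
          exp (((n : ℝ) + 2 * i) / (n : ℝ) ^ 2) := by
  rw [choose_choose_two_mul_div_eq_prod n k hn, prod_mul_distrib, ← exp_sum,
    sum_range_add_two_mul_div_sq, mul_left_comm, ← exp_add, add_sub_cancel]

theorem tendsto_exp_div_sq_nhds_one {k : ℕ → ℕ} (hk : ∀ n, k n ≤ n) :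
    Tendsto (fun n : ℕ => exp ((k n : ℝ) / (n : ℝ) ^ 2)) atTop (𝓝 1) := by
  refine tendsto_exp_nhds_zero_nhds_one.comp (tendsto_of_tendsto_of_tendsto_of_le_of_le
    tendsto_const_nhds (tendsto_const_div_atTop_nhds_zero_nat 1) (fun n => by positivity)
    fun n => ?_)
  rcases Nat.eq_zero_or_pos n with rfl | hn
  · simp
  · have : (k n : ℝ) ≤ n := by exact_mod_cast hk n
    rw [div_le_div_iff₀ (by positivity) (by positivity)]
    nlinarith

theorem tendsto_prod_one_sub_mul_exp_nhds_one {k : ℕ → ℕ} (hk : ∀ n, k n ≤ n) :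
    Tendsto (fun n : ℕ => ∏ i ∈ range (k n),
      (1 - ((n : ℝ) + 2 * i) / (n : ℝ) ^ 2) * exp (((n : ℝ) + 2 * i) / (n : ℝ) ^ 2))
      atTop (𝓝 1) := by
  have hk' (n : ℕ) : (k n : ℝ) ≤ n := by exact_mod_cast hk n
  have h6 : ∀ᶠ n : ℕ in atTop, (6 : ℝ) ≤ n :=
    (eventually_ge_atTop 6).mono fun n hn => by exact_mod_cast hn
  exact tendsto_of_tendsto_of_tendsto_of_le_of_le'
    (tendsto_exp_nhds_zero_nhds_one.comp (tendsto_const_div_atTop_nhds_zero_nat (-18)))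
    tendsto_const_nhds
    (h6.mono fun n hn => exp_neg_div_le_prod_one_sub_mul_exp hn (hk' n))
    (h6.mono fun n hn => prod_one_sub_mul_exp_le_one hn (hk' n))

/-- `C(C(n,2), m(n)) · 2^{m(n)} · m(n)! · n^{-2m(n)} · exp(m(n)/n + m(n)²/n²) → 1`
whenever `m(n) ≤ n`. -/
theorem choose_choose_asymptotics (m : ℕ → ℕ) (hm : ∀ n, m n ≤ n) :
    Tendsto
      (fun n : ℕ =>
        ((n.choose 2).choose (m n) : ℝ) * 2 ^ (m n) * ((m n).factorial : ℝ) /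
            (n : ℝ) ^ (2 * m n) *
          Real.exp ((m n : ℝ) / n + (m n : ℝ) ^ 2 / (n : ℝ) ^ 2))
      atTop (nhds 1) := by
  have hfactors := (tendsto_exp_div_sq_nhds_one hm).mul (tendsto_prod_one_sub_mul_exp_nhds_one hm)
  simpa using hfactors.congr'
    ((eventually_ne_atTop 0).mono fun n hn => (choose_choose_two_mul_exp_eq n (m n) hn).symm)
end
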